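/- For every prime p > 3, ∑_{(a,b) ∈ 𝔽_p²} ( ∑_{x ∈ 𝔽_p} ((x³ − ax + b)/p) )² = p³ − p², where (·/p) denotes the Legendre symbol. Consequently, with ℓ_p and α(p,k) as below, α(p, 1) = 0 and α(p, 2) = 1 + O(1/p). -/

import Mathlib

/-!
Write `χ` for the quadratic character of `𝔽_q`, `q` odd. Expanding the square, the second
moment is `∑_{x,y} ∑_a ∑_b χ((x³ - ax + b)(y³ - ay + b))`. The sum over `b` is a Jacobsthal sum:
`∑_b χ((s + b)(t + b))` is `q - 1` if `s = t` and `-1` otherwise. For `x ≠ y` the values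
`x³ - ax` and `y³ - ay` agree for exactly one `a`, namely `a = x² + xy + y²`, so such pairs
contribute `(q - 1) - (q - 1) = 0`, while each of the `q` diagonal pairs contributes `q(q - 1)`.
The first moment vanishes since `b ↦ χ(c + b)` sums to zero.
-/

/-- `ℓ_p(a,b) = -p^{-1/2} ∑_{x ∈ 𝔽_p} ((x³ - ax + b)/p)`. -/
noncomputable def ellp (p : ℕ) (hp : p.Prime) (a b : ℤ) : ℝ :=
  -(p : ℝ) ^ (-(1 / 2) : ℝ) *
    ∑ x ∈ Finset.range p, (@legendreSym p ⟨hp⟩ ((x : ℤ) ^ 3 - a * x + b) : ℝ)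

/-- `α(p,k) = p^{-2} ∑_{(a,b) ∈ 𝔽_p²} ℓ_p(a,b)^k`. -/
noncomputable def alphaMoment (p : ℕ) (hp : p.Prime) (k : ℕ) : ℝ :=
  ((p : ℝ) ^ 2)⁻¹ *
    ∑ a ∈ Finset.range p, ∑ b ∈ Finset.range p, ellp p hp (a : ℤ) (b : ℤ) ^ k

open Finset

theorem ZMod.sum_range_natCast {M : Type*} [AddCommMonoid M] (n : ℕ) [NeZero n]
    (f : ZMod n → M) : ∑ i ∈ range n, f i = ∑ x : ZMod n, f x :=
  sum_nbij' (↑) ZMod.val (fun _ _ => mem_univ _) (fun x _ => mem_range.2 x.val_lt)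
    (fun _ hi => ZMod.val_cast_of_lt (mem_range.1 hi)) (fun x _ => ZMod.natCast_zmod_val x)
    (fun _ _ => rfl)

theorem ZMod.sum_range_sum_range_natCast {M : Type*} [AddCommMonoid M] (n : ℕ) [NeZero n]
    (f : ZMod n → ZMod n → M) : ∑ i ∈ range n, ∑ j ∈ range n, f i j = ∑ x, ∑ y, f x y := by
  rw [sum_congr rfl fun (i : ℕ) _ => ZMod.sum_range_natCast n (f i)]
  exact ZMod.sum_range_natCast n fun i => ∑ j, f i j

theorem ZMod.ringChar_ne_two {n : ℕ} (hn : n ≠ 2) : ringChar (ZMod n) ≠ 2 := by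
  rwa [ZMod.ringChar_zmod_n]

theorem Fintype.sum_ite_eq_card_sub_one {α : Type*} [Fintype α] [DecidableEq α] (c : α) :
    ∑ a : α, (if a = c then (Fintype.card α : ℤ) - 1 else -1) = 0 := by
  simp [sum_ite, filter_ne', filter_eq', card_erase_of_mem,
    Nat.cast_pred (Fintype.card_pos_iff.2 ⟨c⟩)]

theorem cube_sub_mul_eq_iff {R : Type*} [CommRing R] [NoZeroDivisors R] {x y : R} (hxy : x ≠ y)
    (a : R) : x ^ 3 - a * x = y ^ 3 - a * y ↔ a = x ^ 2 + x * y + y ^ 2 := by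
  rw [← sub_eq_zero, show x ^ 3 - a * x - (y ^ 3 - a * y) = (x - y) * (x ^ 2 + x * y + y ^ 2 - a)
    by ring, mul_eq_zero, sub_eq_zero, sub_eq_zero, or_iff_right hxy, eq_comm]

section FiniteField

variable {F : Type*} [Field F] [Fintype F] [DecidableEq F]

theorem quadraticChar_sum_add (hF : ringChar F ≠ 2) (c : F) :
    ∑ b : F, quadraticChar F (c + b) = 0 := by
  rw [Fintype.sum_equiv (Equiv.addLeft c) (fun b => quadraticChar F (c + b)) _ fun _ => rfl,
    quadraticChar_sum_zero hF]

theorem quadraticChar_sum_sq :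
    ∑ b : F, quadraticChar F (b ^ 2) = (Fintype.card F : ℤ) - 1 := by
  rw [← sum_erase_add _ _ (mem_univ 0),
    sum_congr rfl fun b hb => quadraticChar_sq_one' (ne_of_mem_erase hb)]
  simp [card_erase_of_mem, Nat.cast_pred Fintype.card_pos]

theorem quadraticChar_sum_mul_self_add (hF : ringChar F ≠ 2) {c : F} (hc : c ≠ 0) :
    ∑ b : F, quadraticChar F (b * (b + c)) = -1 := by
  have hscale : ∀ b ≠ (0 : F),
      quadraticChar F (b * (b + c)) = quadraticChar F (1 + c * b⁻¹) := by
    intro b hb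
    rw [show b * (b + c) = b ^ 2 * (1 + c * b⁻¹) by field_simp, map_mul,
      quadraticChar_sq_one' hb, one_mul]
  calc ∑ b : F, quadraticChar F (b * (b + c))
      = ∑ b : F, quadraticChar F (1 + c * b⁻¹) - quadraticChar F 1 := by
        rw [← sum_erase_add _ _ (mem_univ 0), ← sum_erase_add _ _ (mem_univ 0),
          sum_congr rfl fun b hb => hscale b (ne_of_mem_erase hb)]
        simp
    _ = ∑ u : F, quadraticChar F (1 + u) - 1 := by
        rw [Fintype.sum_equiv ((Equiv.inv F).trans (Equiv.mulLeft₀ c hc))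
          (fun b => quadraticChar F (1 + c * b⁻¹)) (fun u => quadraticChar F (1 + u))
          fun _ => rfl, map_one]
    _ = -1 := by rw [quadraticChar_sum_add hF, zero_sub]

theorem quadraticChar_sum_add_mul_add (hF : ringChar F ≠ 2) (s t : F) :
    ∑ b : F, quadraticChar F ((s + b) * (t + b)) =
      if s = t then (Fintype.card F : ℤ) - 1 else -1 := by
  rw [Fintype.sum_equiv (Equiv.addLeft s) _ (fun u => quadraticChar F (u * (u + (t - s))))
    fun b => by simp only [Equiv.coe_addLeft]; ring_nf]
  split_ifs with h
  · simpa [h, ← sq] using quadraticChar_sum_sq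
  · exact quadraticChar_sum_mul_self_add hF (sub_ne_zero.2 (Ne.symm h))

theorem sum_sq_sum_quadraticChar_add {ι : Type*} [Fintype ι] (hF : ringChar F ≠ 2)
    (g : ι → F) :
    ∑ b : F, (∑ x, quadraticChar F (g x + b)) ^ 2 =
      ∑ x, ∑ y, if g x = g y then (Fintype.card F : ℤ) - 1 else -1 := by
  simp_rw [sq, sum_mul_sum, ← map_mul]
  rw [sum_comm]
  refine sum_congr rfl fun x _ => ?_
  rw [sum_comm]
  exact sum_congr rfl fun y _ => quadraticChar_sum_add_mul_add hF _ _

/-- Minus the trace of Frobenius of the curve `y² = x³ - ax + b`. -/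
def cubicCharSum (a b : F) : ℤ :=
  ∑ x : F, quadraticChar F (x ^ 3 - a * x + b)

theorem sum_cubicCharSum_right (hF : ringChar F ≠ 2) (a : F) : ∑ b, cubicCharSum a b = 0 := by
  simp only [cubicCharSum]
  rw [sum_comm]
  exact sum_eq_zero fun x _ => quadraticChar_sum_add hF _

theorem sum_ite_cube_sub_mul_eq (x y : F) :
    ∑ a : F, (if x ^ 3 - a * x = y ^ 3 - a * y then (Fintype.card F : ℤ) - 1 else -1) =
      if x = y then (Fintype.card F : ℤ) * (Fintype.card F - 1) else 0 := by
  split_ifs with hxy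
  · simp [hxy, mul_sub]
  · simp_rw [cube_sub_mul_eq_iff hxy]
    exact Fintype.sum_ite_eq_card_sub_one _

theorem sum_sum_cubicCharSum_sq (hF : ringChar F ≠ 2) :
    ∑ a : F, ∑ b : F, cubicCharSum a b ^ 2 =
      (Fintype.card F : ℤ) ^ 3 - (Fintype.card F : ℤ) ^ 2 := by
  calc ∑ a : F, ∑ b : F, cubicCharSum a b ^ 2
      = ∑ a : F, ∑ x : F, ∑ y : F,
          if x ^ 3 - a * x = y ^ 3 - a * y then (Fintype.card F : ℤ) - 1 else -1 :=
        sum_congr rfl fun a _ => sum_sq_sum_quadraticChar_add hF fun x => x ^ 3 - a * x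
    _ = ∑ x : F, ∑ y : F, if x = y then (Fintype.card F : ℤ) * (Fintype.card F - 1) else 0 := by
        rw [sum_comm]
        refine sum_congr rfl fun x _ => ?_
        rw [sum_comm]
        exact sum_congr rfl fun y _ => sum_ite_cube_sub_mul_eq x y
    _ = (Fintype.card F : ℤ) ^ 3 - (Fintype.card F : ℤ) ^ 2 := by
        simp only [sum_ite_eq, mem_univ, if_true, sum_const, card_univ, nsmul_eq_mul]
        ring

end FiniteField

section ZModPrime

variable {p : ℕ} [hp : Fact p.Prime]

theorem sum_range_legendreSym_cubic (a b : ℕ) :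
    ∑ x ∈ range p, legendreSym p ((x : ℤ) ^ 3 - a * x + b) =
      cubicCharSum (a : ZMod p) (b : ZMod p) := by
  rw [cubicCharSum, ← ZMod.sum_range_natCast p]
  simp [legendreSym]

theorem sum_range_sum_range_sq_legendreSym_cubic (hp2 : p ≠ 2) :
    ∑ a ∈ range p, ∑ b ∈ range p,
        (∑ x ∈ range p, legendreSym p ((x : ℤ) ^ 3 - a * x + b)) ^ 2 =
      (p : ℤ) ^ 3 - (p : ℤ) ^ 2 := by
  simp_rw [sum_range_legendreSym_cubic]
  rw [ZMod.sum_range_sum_range_natCast p fun a b => cubicCharSum a b ^ 2,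
    sum_sum_cubicCharSum_sq (ZMod.ringChar_ne_two hp2), ZMod.card]

theorem ellp_natCast (a b : ℕ) :
    ellp p hp.out a b = -(p : ℝ) ^ (-(1 / 2) : ℝ) * cubicCharSum (a : ZMod p) (b : ZMod p) := by
  rw [ellp, ← Int.cast_sum, sum_range_legendreSym_cubic]

theorem alphaMoment_eq (k : ℕ) :
    alphaMoment p hp.out k = ((p : ℝ) ^ 2)⁻¹ * (-(p : ℝ) ^ (-(1 / 2) : ℝ)) ^ k *
      ∑ a : ZMod p, ∑ b : ZMod p, (cubicCharSum a b : ℝ) ^ k := by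
  simp_rw [alphaMoment, ellp_natCast, mul_pow, ← mul_sum]
  rw [ZMod.sum_range_sum_range_natCast p fun a b => (cubicCharSum a b : ℝ) ^ k, mul_assoc]

theorem alphaMoment_one (hp2 : p ≠ 2) : alphaMoment p hp.out 1 = 0 := by
  simp_rw [alphaMoment_eq, pow_one, ← Int.cast_sum,
    sum_cubicCharSum_right (ZMod.ringChar_ne_two hp2)]
  simp

theorem alphaMoment_two (hp2 : p ≠ 2) : alphaMoment p hp.out 2 = 1 - (p : ℝ)⁻¹ := by
  have hp0 : (0 : ℝ) < p := Nat.cast_pos.2 hp.out.pos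
  have hsq : (-(p : ℝ) ^ (-(1 / 2) : ℝ)) ^ 2 = (p : ℝ)⁻¹ := by
    rw [neg_sq, ← Real.rpow_mul_natCast hp0.le]
    norm_num [Real.rpow_neg_one]
  rw [alphaMoment_eq, hsq]
  simp_rw [← Int.cast_pow, ← Int.cast_sum]
  rw [sum_sum_cubicCharSum_sq (ZMod.ringChar_ne_two hp2), ZMod.card]
  field_simp
  push_cast
  ring

end ZModPrime

/-- Birch's second moment computation: for a prime `p > 3`,
`∑_{(a,b) ∈ 𝔽_p²} (∑_{x ∈ 𝔽_p} ((x³-ax+b)/p))² = p³ - p²`; consequently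
`α(p,1) = 0` and `α(p,2) = 1 + O(1/p)`. -/
theorem second_moment_legendre :
    (∀ (p : ℕ) (hp : p.Prime), 3 < p →
      ((∑ a ∈ Finset.range p, ∑ b ∈ Finset.range p,
          (∑ x ∈ Finset.range p,
            @legendreSym p ⟨hp⟩ ((x : ℤ) ^ 3 - (a : ℤ) * x + (b : ℤ))) ^ 2)
        = (p : ℤ) ^ 3 - (p : ℤ) ^ 2) ∧
      alphaMoment p hp 1 = 0) ∧
    ∃ C : ℝ, 0 < C ∧ ∀ (p : ℕ) (hp : p.Prime), 3 < p →
      |alphaMoment p hp 2 - 1| ≤ C / p := by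
  refine ⟨fun p hp hp3 => ?_, 1, one_pos, fun p hp hp3 => ?_⟩
  · have := Fact.mk hp
    exact ⟨sum_range_sum_range_sq_legendreSym_cubic (by omega), alphaMoment_one (by omega)⟩
  · have := Fact.mk hp
    rw [alphaMoment_two (by omega), sub_sub_cancel_left, abs_neg, abs_of_pos (by positivity),
      one_div]
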